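/- For every n ≥ 2 and every h ≥ 0, the number of bargraphs of semiperimeter n whose least column height equals h equals the number of bargraphs of semiperimeter n whose leftmost horizontal segment has width h. -/

import Mathlib

/-- Steps of bargraphs / Motzkin paths. -/
inductive Step where
  | U : Step
  | H : Step
  | D : Step
deriving DecidableEq

/-- Vertical displacement of a step. -/
def Step.val : Step → ℤ
  | .U => 1
  | .H => 0
  | .D => -1

/-- Mirror of a step (swap U and D). -/
def Step.mirror : Step → Step
  | .U => .D
  | .H => .H
  | .D => .U

/-- Final height of a word. -/
def hgt (w : List Step) : ℤ := (w.map Step.val).sum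

/-- A Motzkin path prefix: never goes below the x-axis. -/
def IsMotzkinPrefix (w : List Step) : Prop := ∀ p : List Step, p <+: w → 0 ≤ hgt p

/-- A Motzkin path: never below the x-axis, ends at height 0. -/
def IsMotzkin (w : List Step) : Prop := IsMotzkinPrefix w ∧ hgt w = 0

/-- No peak `UD` and no valley `DU`. -/
def Cornerless (w : List Step) : Prop :=
  ¬ [Step.U, Step.D] <:+: w ∧ ¬ [Step.D, Step.U] <:+: w

/-- A bargraph: starts at the origin, ends on the x-axis, stays strictly above the
x-axis except at the endpoints, and has no factor `UD` or `DU`. -/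
def IsBargraph (w : List Step) : Prop :=
  2 ≤ w.length ∧ hgt w = 0 ∧
    (∀ p : List Step, p <+: w → p ≠ [] → p ≠ w → 0 < hgt p) ∧ Cornerless w

/-- Semiperimeter: number of `U` steps plus number of `H` steps. -/
def semi (w : List Step) : ℕ := w.count Step.U + w.count Step.H

/-- Length of the initial run of `U` steps. -/
def leadU : List Step → ℕ
  | Step.U :: rest => leadU rest + 1
  | _ => 0

/-- Length of the initial run of `H` steps. -/
def leadH : List Step → ℕ
  | Step.H :: rest => leadH rest + 1
  | _ => 0

/-- Length of the initial run of `D` steps. -/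
def leadD : List Step → ℕ
  | Step.D :: rest => leadD rest + 1
  | _ => 0

/-- Length of the first maximal run of `D` steps (0 if none). -/
def firstDescLen : List Step → ℕ
  | [] => 0
  | Step.D :: rest => leadD rest + 1
  | _ :: rest => firstDescLen rest

/-- Number of occurrences of the two-letter factor `a b`. -/
def cnt2 (a b : Step) : List Step → ℕ
  | x :: y :: rest => (if x = a ∧ y = b then 1 else 0) + cnt2 a b (y :: rest)
  | _ => 0

/-- Heights of the columns (`H` steps), starting from a given height. -/
def colHeights : ℤ → List Step → List ℤ
  | _, [] => []
  | h, Step.U :: rest => colHeights (h + 1) rest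
  | h, Step.H :: rest => h :: colHeights h rest
  | h, Step.D :: rest => colHeights (h - 1) rest

/-- Width of the leftmost maximal horizontal segment (0 if none). -/
def lhsW : List Step → ℕ
  | [] => 0
  | Step.H :: rest => leadH rest + 1
  | _ :: rest => lhsW rest

/-- Delete `h` steps at the start of the leftmost horizontal segment. -/
def stripLeadH (h : ℕ) : List Step → List Step
  | [] => []
  | Step.H :: rest => List.drop h (Step.H :: rest)
  | s :: rest => s :: stripLeadH h rest

/-- Number of initial columns of height 1: largest `j` such that the word begins `U H^j`. -/
def iuc : List Step → ℕ
  | Step.U :: rest => leadH rest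
  | _ => 0

/-- Number of maximal horizontal segments. -/
def hsCount : List Step → ℕ
  | [] => 0
  | [Step.H] => 1
  | [_] => 0
  | a :: b :: rest => (if a = Step.H ∧ b ≠ Step.H then 1 else 0) + hsCount (b :: rest)

/-- Mirror image: reverse the word and swap `U` with `D`. -/
def mir (w : List Step) : List Step := (w.reverse).map Step.mirror

/-- Shape of strictly alternating bargraphs:
`U^{i₁} H D^{k₁} H U^{i₂} H D^{k₂} H ⋯ U^{iₘ} H D^{kₘ}` with all `iᵣ, kᵣ ≥ 1`. -/
inductive SAShape : List Step → Prop where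
  | base (i k : ℕ) : 1 ≤ i → 1 ≤ k →
      SAShape (List.replicate i Step.U ++ [Step.H] ++ List.replicate k Step.D)
  | cons (i k : ℕ) (w : List Step) : 1 ≤ i → 1 ≤ k → SAShape w →
      SAShape (List.replicate i Step.U ++ [Step.H] ++ List.replicate k Step.D ++ [Step.H] ++ w)

/-- A strictly alternating bargraph. -/
def IsStrictAlt (w : List Step) : Prop := IsBargraph w ∧ SAShape w

/-- A secondary structure on `{0, …, m-1}`: all consecutive edges are present, every
vertex has at most one non-consecutive neighbour, and there are no crossing edges. -/
def IsSecondaryStructure {m : ℕ} (G : SimpleGraph (Fin m)) : Prop :=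
  (∀ i j : Fin m, (i : ℕ) + 1 = (j : ℕ) → G.Adj i j) ∧
  (∀ i j k : Fin m, G.Adj i j → G.Adj i k →
      (i : ℕ) + 1 ≠ (j : ℕ) → (j : ℕ) + 1 ≠ (i : ℕ) →
      (i : ℕ) + 1 ≠ (k : ℕ) → (k : ℕ) + 1 ≠ (i : ℕ) → j = k) ∧
  ¬ ∃ i j k l : Fin m, (i : ℕ) < (j : ℕ) ∧ (j : ℕ) < (k : ℕ) ∧ (k : ℕ) < (l : ℕ) ∧
      G.Adj i k ∧ G.Adj j l

/-- Generating function of bargraphs: `x` (variable 0) marks `H` steps,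
`y` (variable 1) marks `U` steps. -/
noncomputable def BG : MvPowerSeries (Fin 2) ℚ :=
  fun d => (Nat.card {w : List Step //
    IsBargraph w ∧ w.count Step.H = d 0 ∧ w.count Step.U = d 1} : ℚ)

/-- Generating function of cornerless Motzkin paths. -/
noncomputable def MG : MvPowerSeries (Fin 2) ℚ :=
  fun d => (Nat.card {w : List Step //
    IsMotzkin w ∧ Cornerless w ∧ w.count Step.H = d 0 ∧ w.count Step.U = d 1} : ℚ)

/-- Generating function of bargraphs avoiding the factor `DH`. -/
noncomputable def BDH : MvPowerSeries (Fin 2) ℚ :=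
  fun d => (Nat.card {w : List Step //
    IsBargraph w ∧ ¬ [Step.D, Step.H] <:+: w ∧
      w.count Step.H = d 0 ∧ w.count Step.U = d 1} : ℚ)

/-- Generating function of bargraphs avoiding the factors `DH` and `HH`. -/
noncomputable def BDHHH : MvPowerSeries (Fin 2) ℚ :=
  fun d => (Nat.card {w : List Step //
    IsBargraph w ∧ ¬ [Step.D, Step.H] <:+: w ∧ ¬ [Step.H, Step.H] <:+: w ∧
      w.count Step.H = d 0 ∧ w.count Step.U = d 1} : ℚ)

/-- Generating function of cornerless Motzkin path prefixes ending at height `h`. -/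
noncomputable def Pgf (h : ℕ) : MvPowerSeries (Fin 2) ℚ :=
  fun d => (Nat.card {w : List Step //
    IsMotzkinPrefix w ∧ Cornerless w ∧ hgt w = (h : ℤ) ∧
      w.count Step.H = d 0 ∧ w.count Step.U = d 1} : ℚ)

/-- Decomposition `G = U^a G₁ H G₂ D^a` of a strictly alternating bargraph. -/
def SADecomp (t : ℕ × List Step × List Step) (G : List Step) : Prop :=
  1 ≤ t.1 ∧ IsStrictAlt t.2.1 ∧ IsStrictAlt (Step.U :: (t.2.2 ++ [Step.D])) ∧
    G = List.replicate t.1 Step.U ++ t.2.1 ++ [Step.H] ++ t.2.2 ++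
      List.replicate t.1 Step.D


/-!
A bargraph is determined by its column heights `c₁, …, cₘ ≥ 1`, and its semiperimeter is
`m + Σ (cᵢ - cᵢ₋₁)⁺` with `c₀ = 0`. Among such sequences of weight `n`, let `A k n` be those with
all heights `≥ k` and `B k n` those whose first `k` heights are equal. Lowering every column by
one is a bijection `A (k+1) (n+1) ≃ A k n`, and deleting the first column is a bijection
`B (k+1) (n+1) ≃ B k n` (for `k ≥ 1`); as `A 1 n = B 1 n`, we get `|A k n| = |B k n|` for every
`k`. The least column height is `h` exactly on `A h n \ A (h+1) n`, and the leftmost horizontal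
segment has width `h` exactly on `B h n \ B (h+1) n`.
-/

namespace Bargraph

open List Step

def vrun (p c : ℕ) : List Step :=
  if p ≤ c then replicate (c - p) U else replicate (p - c) D

/-- `ofHeights 0 cs` is the bargraph with column heights `cs`. -/
def ofHeights : ℕ → List ℕ → List Step
  | p, [] => replicate p D
  | p, c :: cs => vrun p c ++ H :: ofHeights c cs

def IsColumnHeights (cs : List ℕ) : Prop := cs ≠ [] ∧ ∀ c ∈ cs, 1 ≤ c

/-- `c - p` truncates: only ascents contribute `U` steps. -/
def heightsSemi : ℕ → List ℕ → ℕ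
  | _, [] => 0
  | p, c :: cs => (c - p) + 1 + heightsSemi c cs

def headRun : List ℕ → ℕ
  | [] => 0
  | c :: cs => (cs.takeWhile (· = c)).length + 1

section Encoding

variable {p c : ℕ} {cs : List ℕ}

lemma ofHeights_cons_self : ofHeights p (p :: cs) = H :: ofHeights p cs := by
  simp [ofHeights, vrun]

lemma ofHeights_cons_of_lt (h : p < c) :
    ofHeights p (c :: cs) = U :: ofHeights (p + 1) (c :: cs) := by
  simp only [ofHeights, vrun, if_pos h.le, if_pos (Nat.succ_le_of_lt h)]
  rw [show c - p = c - (p + 1) + 1 by omega, replicate_succ, cons_append]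

lemma ofHeights_succ (h : ∀ c ∈ cs.head?, c ≤ p) :
    ofHeights (p + 1) cs = D :: ofHeights p cs := by
  cases cs with
  | nil => simp [ofHeights, replicate_succ]
  | cons c cs =>
    have hc : c ≤ p := h c rfl
    simp only [ofHeights, vrun]
    rcases hc.eq_or_lt with rfl | hlt
    · simp
    · rw [if_neg (by omega), if_neg (by omega), show p + 1 - c = p - c + 1 by omega,
        replicate_succ, cons_append]

lemma head?_ofHeights_cons_ne_D (h : p ≤ c) : (ofHeights p (c :: cs)).head? ≠ some D := by
  rcases h.eq_or_lt with rfl | hlt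
  · simp [ofHeights_cons_self]
  · simp [ofHeights_cons_of_lt hlt]

lemma head?_ofHeights_ne_U (h : ∀ c ∈ cs.head?, c ≤ p) :
    (ofHeights p cs).head? ≠ some U := by
  cases cs with
  | nil => cases p <;> simp [ofHeights, replicate_succ]
  | cons c cs =>
    rcases (h c rfl).eq_or_lt with rfl | hlt
    · simp [ofHeights_cons_self]
    · obtain ⟨q, rfl⟩ := Nat.exists_eq_add_of_lt hlt
      rw [ofHeights_succ fun d hd => by cases hd; omega]
      simp

lemma colHeights_replicate_U_append (k : ℕ) (h : ℤ) (w : List Step) :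
    colHeights h (replicate k U ++ w) = colHeights (h + k) w := by
  induction k generalizing h with
  | zero => simp
  | succ k ih => rw [replicate_succ, cons_append, colHeights, ih]; push_cast; ring_nf

lemma colHeights_replicate_D_append (k : ℕ) (h : ℤ) (w : List Step) :
    colHeights h (replicate k D ++ w) = colHeights (h - k) w := by
  induction k generalizing h with
  | zero => simp
  | succ k ih => rw [replicate_succ, cons_append, colHeights, ih]; push_cast; ring_nf

lemma colHeights_vrun_append (p c : ℕ) (w : List Step) :
    colHeights p (vrun p c ++ w) = colHeights c w := by
  unfold vrun
  split
  · rw [colHeights_replicate_U_append]; congr 1; omega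
  · rw [colHeights_replicate_D_append]; congr 1; omega

lemma colHeights_ofHeights (p : ℕ) (cs : List ℕ) :
    colHeights p (ofHeights p cs) = cs.map (↑) := by
  induction cs generalizing p with
  | nil => simpa [ofHeights, colHeights] using colHeights_replicate_D_append p p []
  | cons c cs ih => simp [ofHeights, colHeights_vrun_append, colHeights, ih]

lemma ofHeights_zero_injective : Function.Injective (ofHeights 0) := fun cs ds h => by
  have := congr_arg (colHeights 0) h
  rw [← Nat.cast_zero, colHeights_ofHeights, colHeights_ofHeights] at this
  exact map_injective_iff.2 Nat.cast_injective this

lemma semi_ofHeights (p : ℕ) (cs : List ℕ) : semi (ofHeights p cs) = heightsSemi p cs := by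
  induction cs generalizing p with
  | nil => simp [semi, ofHeights, heightsSemi, count_replicate]
  | cons c cs ih =>
    have hU : (vrun p c).count U = c - p := by
      unfold vrun; split <;> simp [count_replicate]; omega
    have hH : (vrun p c).count H = 0 := by
      unfold vrun; split <;> simp [count_replicate]
    have := ih c
    simp only [semi] at this ⊢
    simp only [ofHeights, heightsSemi, count_append, count_cons, hU, hH]
    simp
    omega

lemma leadH_ofHeights (hp : 1 ≤ p) (hcs : ∀ c ∈ cs, 1 ≤ c) :
    leadH (ofHeights p cs) = (cs.takeWhile (· = p)).length := by
  induction cs generalizing p with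
  | nil =>
    obtain ⟨q, rfl⟩ := Nat.exists_eq_add_of_le' hp
    simp [ofHeights, replicate_succ, leadH]
  | cons c cs ih =>
    rcases lt_trichotomy p c with hlt | rfl | hgt
    · simp [ofHeights_cons_of_lt hlt, leadH, hlt.ne']
    · simp [ofHeights_cons_self, leadH, ih hp fun d hd => hcs d (mem_cons_of_mem _ hd)]
    · obtain ⟨q, rfl⟩ := Nat.exists_eq_add_of_lt hgt
      simp [ofHeights_succ (p := c + q) (cs := c :: cs) (fun d hd => by cases hd; omega), leadH,
        show c ≠ c + q + 1 by omega]

lemma lhsW_ofHeights (hcs : IsColumnHeights cs) : lhsW (ofHeights 0 cs) = headRun cs := by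
  obtain ⟨c, cs, rfl⟩ := exists_cons_of_ne_nil hcs.1
  have hlhsW : ∀ k w, lhsW (replicate k U ++ w) = lhsW w := by
    intro k w; induction k <;> simp_all [replicate_succ, lhsW]
  have hc := hcs.2 c mem_cons_self
  simp [ofHeights, vrun, hlhsW, lhsW, headRun,
    leadH_ofHeights hc fun d hd => hcs.2 d (mem_cons_of_mem c hd)]

end Encoding

/-- What remains of a bargraph after a prefix ending at height `p`. -/
def IsBarSuffix (p : ℤ) (w : List Step) : Prop :=
  p + hgt w = 0 ∧ (∀ q, q <+: w → q ≠ w → 0 < p + hgt q) ∧ Cornerless w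

section Suffix

variable {p : ℤ} {x : Step} {t : List Step}

lemma hgt_cons : hgt (x :: t) = x.val + hgt t := by simp [hgt]

lemma cornerless_cons : Cornerless (x :: t) ↔
    (x = U → t.head? ≠ some D) ∧ (x = D → t.head? ≠ some U) ∧ Cornerless t := by
  cases t <;> cases x <;> simp [Cornerless, infix_cons_iff] <;> tauto

lemma forall_prefix_cons {α : Type*} {a : α} {l : List α} {P : List α → Prop} :
    (∀ q, q <+: a :: l → q ≠ a :: l → P q) ↔ P [] ∧ ∀ q, q <+: l → q ≠ l → P (a :: q) := by
  simp only [prefix_cons_iff, or_imp, forall_and, forall_eq, exists_imp, and_imp]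
  simp only [forall_comm (α := List α), forall_eq]
  simp

lemma isBarSuffix_nil : IsBarSuffix p [] ↔ p = 0 := by
  simp [IsBarSuffix, hgt, Cornerless]

lemma isBarSuffix_cons : IsBarSuffix p (x :: t) ↔ 0 < p ∧ IsBarSuffix (p + x.val) t ∧
    (x = U → t.head? ≠ some D) ∧ (x = D → t.head? ≠ some U) := by
  simp only [IsBarSuffix, cornerless_cons, forall_prefix_cons, hgt_cons, add_assoc]
  simp [hgt]
  tauto

lemma isBargraph_cons : IsBargraph (x :: t) ↔ t ≠ [] ∧ IsBarSuffix x.val t ∧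
    (x = U → t.head? ≠ some D) ∧ (x = D → t.head? ≠ some U) := by
  have hpre : (∀ q, q <+: x :: t → q ≠ [] → q ≠ x :: t → 0 < hgt q) ↔
      ∀ q, q <+: t → q ≠ t → 0 < x.val + hgt q := by
    simp only [fun q => @imp.swap (q ≠ [])]
    simp [forall_prefix_cons, hgt_cons]
  simp only [IsBargraph, IsBarSuffix, cornerless_cons, hpre, hgt_cons]
  simp [Nat.one_le_iff_ne_zero]
  tauto

end Suffix

section Correspondence

variable {p c : ℕ} {cs : List ℕ}

lemma isBarSuffix_ofHeights_succ (h : IsBarSuffix p (ofHeights p cs))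
    (hcs : ∀ c ∈ cs.head?, c ≤ p) : IsBarSuffix (p + 1 : ℕ) (ofHeights (p + 1) cs) := by
  rw [ofHeights_succ hcs, isBarSuffix_cons]
  exact ⟨by positivity, by simpa [Step.val] using h, by simp, fun _ => head?_ofHeights_ne_U hcs⟩

lemma isBarSuffix_ofHeights_of_lt (h : IsBarSuffix (p + 1 : ℕ) (ofHeights (p + 1) (c :: cs)))
    (hp : 0 < p) (hpc : p < c) : IsBarSuffix p (ofHeights p (c :: cs)) := by
  rw [ofHeights_cons_of_lt hpc, isBarSuffix_cons]
  exact ⟨by exact_mod_cast hp, by simpa [Step.val] using h,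
    fun _ => head?_ofHeights_cons_ne_D hpc, by simp⟩

lemma isBarSuffix_ofHeights (hp : 1 ≤ p) (hcs : ∀ c ∈ cs, 1 ≤ c) :
    IsBarSuffix p (ofHeights p cs) := by
  induction cs generalizing p with
  | nil =>
    clear hp
    induction p with
    | zero => simp [ofHeights, isBarSuffix_nil]
    | succ p ih => exact isBarSuffix_ofHeights_succ ih (by simp)
  | cons c cs ih =>
    have hc := hcs c mem_cons_self
    have hcol : IsBarSuffix c (ofHeights c (c :: cs)) := by
      rw [ofHeights_cons_self, isBarSuffix_cons]
      have htail := ih hc fun d hd => hcs d (mem_cons_of_mem _ hd)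
      exact ⟨by exact_mod_cast hc, by simpa [Step.val] using htail, by simp, by simp⟩
    rcases le_total p c with hpc | hcp
    · induction hpc using Nat.decreasingInduction with
      | self => exact hcol
      | of_succ q hq ihq => exact isBarSuffix_ofHeights_of_lt (ihq (by omega)) (by omega) hq
    · induction p, hcp using Nat.le_induction with
      | base => exact hcol
      | succ q hq ihq => exact isBarSuffix_ofHeights_succ (ihq (by omega)) (by simpa using hq)

lemma exists_cons_of_head?_ofHeights_ne_D (h : (ofHeights (p + 1) cs).head? ≠ some D) :
    ∃ c cs', cs = c :: cs' ∧ p < c := by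
  by_contra! hle
  exact h (by rw [ofHeights_succ fun c hc => hle c _ (eq_cons_of_mem_head? hc)]; rfl)

lemma head_le_of_head?_ofHeights_ne_U (h : (ofHeights p cs).head? ≠ some U) :
    ∀ c ∈ cs.head?, c ≤ p := by
  intro c hc
  by_contra! hpc
  rw [eq_cons_of_mem_head? hc, ofHeights_cons_of_lt hpc] at h
  exact h rfl

lemma exists_ofHeights_of_isBarSuffix :
    ∀ (w : List Step) (p : ℕ), IsBarSuffix p w → ∃ cs, (∀ c ∈ cs, 1 ≤ c) ∧ ofHeights p cs = w
  | [], p, h => ⟨[], by simp, by simp_all [isBarSuffix_nil, ofHeights]⟩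
  | x :: t, p, h => by
    obtain ⟨hp, ht, hU, hD⟩ := isBarSuffix_cons.1 h
    cases x with
    | H =>
      obtain ⟨cs, hcs, rfl⟩ := exists_ofHeights_of_isBarSuffix t p (by simpa [Step.val] using ht)
      exact ⟨p :: cs, forall_mem_cons.2 ⟨by exact_mod_cast hp, hcs⟩, ofHeights_cons_self⟩
    | U =>
      obtain ⟨cs, hcs, rfl⟩ :=
        exists_ofHeights_of_isBarSuffix t (p + 1) (by simpa [Step.val] using ht)
      obtain ⟨c, cs, rfl, hpc⟩ := exists_cons_of_head?_ofHeights_ne_D (hU rfl)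
      exact ⟨c :: cs, hcs, ofHeights_cons_of_lt hpc⟩
    | D =>
      obtain ⟨q, rfl⟩ := Nat.exists_eq_add_one.2 (by exact_mod_cast hp : 0 < p)
      obtain ⟨cs, hcs, rfl⟩ := exists_ofHeights_of_isBarSuffix t q (by simpa [Step.val] using ht)
      exact ⟨cs, hcs, ofHeights_succ (head_le_of_head?_ofHeights_ne_U (hD rfl))⟩

lemma isBargraph_iff_exists_ofHeights {w : List Step} :
    IsBargraph w ↔ ∃ cs, IsColumnHeights cs ∧ ofHeights 0 cs = w := by
  constructor
  · intro hw
    obtain ⟨x, t, rfl⟩ := exists_cons_of_ne_nil (show w ≠ [] by rintro rfl; simp [IsBargraph] at hw)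
    obtain ⟨ht, hsuf, hU, -⟩ := isBargraph_cons.1 hw
    obtain rfl : x = U := by
      obtain ⟨y, t', rfl⟩ := exists_cons_of_ne_nil ht
      have := (isBarSuffix_cons.1 hsuf).1
      cases x <;> simp [Step.val] at this ⊢
    obtain ⟨cs, hcs, rfl⟩ := exists_ofHeights_of_isBarSuffix t 1 (by simpa [Step.val] using hsuf)
    obtain ⟨c, cs, rfl, hc⟩ := exists_cons_of_head?_ofHeights_ne_D (p := 0) (hU rfl)
    exact ⟨c :: cs, ⟨cons_ne_nil _ _, hcs⟩, ofHeights_cons_of_lt hc⟩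
  · rintro ⟨cs, ⟨hne, hcs⟩, rfl⟩
    obtain ⟨c, cs, rfl⟩ := exists_cons_of_ne_nil hne
    have hc := hcs c mem_cons_self
    rw [ofHeights_cons_of_lt hc, isBargraph_cons]
    exact ⟨by simp [ofHeights], by simpa [Step.val] using isBarSuffix_ofHeights le_rfl hcs,
      fun _ => head?_ofHeights_cons_ne_D hc, by simp⟩

end Correspondence

lemma length_le_heightsSemi (p : ℕ) (cs : List ℕ) : cs.length ≤ heightsSemi p cs := by
  induction cs generalizing p with
  | nil => simp [heightsSemi]
  | cons c cs ih => simp only [heightsSemi, length_cons]; have := ih c; omega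

lemma le_add_heightsSemi (p : ℕ) (cs : List ℕ) : ∀ c ∈ cs, c ≤ p + heightsSemi p cs := by
  induction cs generalizing p with
  | nil => simp
  | cons c cs ih =>
    simp only [heightsSemi, mem_cons, forall_eq_or_imp]
    exact ⟨by omega, fun d hd => by have := ih c d hd; omega⟩

lemma finite_heightsSemi_eq (n : ℕ) : {cs | heightsSemi 0 cs = n}.Finite := by
  refine ((finite_length_le (Fin (n + 1)) n).image (map Fin.val)).subset fun cs hcs => ?_
  have hlt : ∀ c ∈ cs, c < n + 1 := fun c hc => by
    have := le_add_heightsSemi 0 cs c hc; simp_all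
  refine ⟨cs.pmap Fin.mk hlt, ?_, ?_⟩
  · simpa [hcs.symm] using length_le_heightsSemi 0 cs
  · simp [map_pmap]

lemma heightsSemi_map_add_one (p : ℕ) (cs : List ℕ) :
    heightsSemi (p + 1) (cs.map (· + 1)) = heightsSemi p cs := by
  induction cs generalizing p with
  | nil => rfl
  | cons c cs ih => simp only [map_cons, heightsSemi, ih]; omega

lemma heightsSemi_zero_map_add_one {cs : List ℕ} (hcs : cs ≠ []) :
    heightsSemi 0 (cs.map (· + 1)) = heightsSemi 0 cs + 1 := by
  obtain ⟨c, cs, rfl⟩ := exists_cons_of_ne_nil hcs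
  simp only [map_cons, heightsSemi, heightsSemi_map_add_one]
  omega

lemma heightsSemi_cons_cons_self (p c : ℕ) (cs : List ℕ) :
    heightsSemi p (c :: c :: cs) = heightsSemi p (c :: cs) + 1 := by
  simp only [heightsSemi]; omega

lemma headRun_cons_cons_self (c : ℕ) (cs : List ℕ) :
    headRun (c :: c :: cs) = headRun (c :: cs) + 1 := by
  simp [headRun]

lemma exists_eq_cons_cons_of_two_le_headRun {cs : List ℕ} (h : 2 ≤ headRun cs) :
    ∃ c cs', cs = c :: c :: cs' := by
  match cs, h with
  | c :: d :: cs', h =>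
    obtain rfl : d = c := by by_contra hdc; simp [headRun, hdc] at h
    exact ⟨d, cs', rfl⟩

lemma one_le_headRun {cs : List ℕ} (h : cs ≠ []) : 1 ≤ headRun cs := by
  obtain ⟨c, cs, rfl⟩ := exists_cons_of_ne_nil h
  simp [headRun]

section Counting

def columnHeights (n : ℕ) : Set (List ℕ) := {cs | IsColumnHeights cs ∧ heightsSemi 0 cs = n}

def minAtLeast (k n : ℕ) : Set (List ℕ) := {cs ∈ columnHeights n | ∀ c ∈ cs, k ≤ c}

def headRunAtLeast (k n : ℕ) : Set (List ℕ) := {cs ∈ columnHeights n | k ≤ headRun cs}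

variable {k n : ℕ}

lemma columnHeights_finite (n : ℕ) : (columnHeights n).Finite :=
  (finite_heightsSemi_eq n).subset fun _ hcs => hcs.2

lemma columnHeights_zero : columnHeights 0 = ∅ := by
  refine Set.eq_empty_of_forall_notMem fun cs ⟨⟨hne, _⟩, h0⟩ => ?_
  have := length_le_heightsSemi 0 cs
  simp_all

lemma minAtLeast_of_le_one (hk : k ≤ 1) : minAtLeast k n = columnHeights n :=
  Set.sep_eq_self_iff_mem_true.2 fun _ hcs c hc => hk.trans (hcs.1.2 c hc)

lemma headRunAtLeast_of_le_one (hk : k ≤ 1) : headRunAtLeast k n = columnHeights n :=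
  Set.sep_eq_self_iff_mem_true.2 fun _ hcs => hk.trans (one_le_headRun hcs.1.1)

lemma minAtLeast_add_one_add_one (hk : 1 ≤ k) :
    minAtLeast (k + 1) (n + 1) = map (· + 1) '' minAtLeast k n := by
  ext cs
  constructor
  · rintro ⟨⟨⟨hne, -⟩, hsemi⟩, hmin⟩
    have hcs : (cs.map (· - 1)).map (· + 1) = cs := by
      rw [map_map]
      exact (map_congr_left fun c hc => by have := hmin c hc; simp; omega).trans (map_id cs)
    have hne' : cs.map (· - 1) ≠ [] := by simpa using hne
    have hmin' : ∀ c ∈ cs.map (· - 1), k ≤ c := by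
      simp only [mem_map, forall_exists_index, and_imp, forall_apply_eq_imp_iff₂]
      exact fun c hc => by have := hmin c hc; omega
    have hsemi' := heightsSemi_zero_map_add_one hne'
    rw [hcs] at hsemi'
    exact ⟨cs.map (· - 1), ⟨⟨⟨hne', fun c hc => hk.trans (hmin' c hc)⟩, by omega⟩, hmin'⟩, hcs⟩
  · rintro ⟨cs, ⟨⟨⟨hne, -⟩, hsemi⟩, hmin⟩, rfl⟩
    refine ⟨⟨⟨by simpa using hne, by simp⟩, by rw [heightsSemi_zero_map_add_one hne, hsemi]⟩, ?_⟩
    simp only [mem_map, forall_exists_index, and_imp, forall_apply_eq_imp_iff₂]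
    exact fun c hc => by have := hmin c hc; omega

lemma headRunAtLeast_add_one_add_one (hk : 1 ≤ k) :
    headRunAtLeast (k + 1) (n + 1) = (fun cs => cs.headI :: cs) '' headRunAtLeast k n := by
  ext cs
  constructor
  · rintro ⟨⟨⟨-, hcs⟩, hsemi⟩, hrun⟩
    obtain ⟨c, cs, rfl⟩ := exists_eq_cons_cons_of_two_le_headRun (by omega : 2 ≤ headRun cs)
    rw [heightsSemi_cons_cons_self] at hsemi
    rw [headRun_cons_cons_self] at hrun
    exact ⟨c :: cs, ⟨⟨⟨cons_ne_nil _ _, fun d hd => hcs d (mem_cons_of_mem _ hd)⟩, by omega⟩,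
      by omega⟩, rfl⟩
  · rintro ⟨cs, ⟨⟨⟨hne, hcs⟩, hsemi⟩, hrun⟩, rfl⟩
    obtain ⟨c, cs, rfl⟩ := exists_cons_of_ne_nil hne
    refine ⟨⟨⟨cons_ne_nil _ _, forall_mem_cons.2 ⟨hcs c mem_cons_self, hcs⟩⟩, ?_⟩, ?_⟩
    · simp [heightsSemi_cons_cons_self, hsemi]
    · simp [headRun_cons_cons_self, hrun]

lemma ncard_minAtLeast_eq_ncard_headRunAtLeast :
    ∀ k n, (minAtLeast k n).ncard = (headRunAtLeast k n).ncard
  | 0, n | 1, n => by rw [minAtLeast_of_le_one (by omega), headRunAtLeast_of_le_one (by omega)]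
  | k + 2, 0 => by simp [minAtLeast, headRunAtLeast, columnHeights_zero]
  | k + 2, n + 1 => by
    rw [minAtLeast_add_one_add_one (by omega), headRunAtLeast_add_one_add_one (by omega),
      Set.ncard_image_of_injective _ (map_injective_iff.2 (add_left_injective 1)),
      Set.ncard_image_of_injective _ fun _ _ h => (cons.inj h).2]
    exact ncard_minAtLeast_eq_ncard_headRunAtLeast (k + 1) n

lemma sep_min_eq_sdiff (h n : ℕ) : {cs ∈ columnHeights n | h ∈ cs ∧ ∀ c ∈ cs, h ≤ c} =
    minAtLeast h n \ minAtLeast (h + 1) n := by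
  ext cs
  simp only [minAtLeast, Set.mem_sdiff, Set.mem_ofPred_eq, not_and, not_forall]
  refine ⟨fun ⟨hcs, hh, hle⟩ => ⟨⟨hcs, hle⟩, fun _ => ⟨h, hh, by omega⟩⟩, ?_⟩
  rintro ⟨⟨hcs, hle⟩, hex⟩
  obtain ⟨c, hc, hlt⟩ := hex hcs
  obtain rfl : c = h := by have := hle c hc; omega
  exact ⟨hcs, hc, hle⟩

lemma sep_headRun_eq_sdiff (h n : ℕ) : {cs ∈ columnHeights n | headRun cs = h} =
    headRunAtLeast h n \ headRunAtLeast (h + 1) n := by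
  ext cs
  simp only [headRunAtLeast, Set.mem_sdiff, Set.mem_ofPred_eq, not_and, not_le]
  exact ⟨fun ⟨hcs, hrun⟩ => ⟨⟨hcs, hrun.ge⟩, fun _ => by omega⟩,
    fun ⟨⟨hcs, hle⟩, hlt⟩ => ⟨hcs, by have := hlt hcs; omega⟩⟩

lemma ncard_min_eq_ncard_headRun (h n : ℕ) :
    {cs ∈ columnHeights n | h ∈ cs ∧ ∀ c ∈ cs, h ≤ c}.ncard =
      {cs ∈ columnHeights n | headRun cs = h}.ncard := by
  have hfin : ∀ s ⊆ columnHeights n, s.Finite := fun _ hs => (columnHeights_finite n).subset hs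
  have hmin := Set.ncard_sdiff_add_ncard_of_subset
    (show minAtLeast (h + 1) n ⊆ minAtLeast h n from
      fun cs hcs => ⟨hcs.1, fun c hc => (hcs.2 c hc).trans' h.le_succ⟩)
    (hfin _ fun _ => And.left)
  have hrun := Set.ncard_sdiff_add_ncard_of_subset
    (show headRunAtLeast (h + 1) n ⊆ headRunAtLeast h n from
      fun cs hcs => ⟨hcs.1, h.le_succ.trans hcs.2⟩)
    (hfin _ fun _ => And.left)
  rw [sep_min_eq_sdiff, sep_headRun_eq_sdiff]
  have := ncard_minAtLeast_eq_ncard_headRunAtLeast h n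
  have := ncard_minAtLeast_eq_ncard_headRunAtLeast (h + 1) n
  omega

end Counting

lemma card_bargraph_eq_ncard {n : ℕ} {P : List Step → Prop} {Q : List ℕ → Prop}
    (hPQ : ∀ cs, IsColumnHeights cs → (P (ofHeights 0 cs) ↔ Q cs)) :
    Nat.card {w : List Step // IsBargraph w ∧ semi w = n ∧ P w} =
      {cs ∈ columnHeights n | Q cs}.ncard := by
  have hset : {w | IsBargraph w ∧ semi w = n ∧ P w} =
      ofHeights 0 '' {cs ∈ columnHeights n | Q cs} := by
    ext w
    simp only [Set.mem_ofPred_eq, Set.mem_image, isBargraph_iff_exists_ofHeights]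
    constructor
    · rintro ⟨⟨cs, hcs, rfl⟩, hsemi, hP⟩
      exact ⟨cs, ⟨⟨hcs, by rwa [← semi_ofHeights]⟩, (hPQ cs hcs).1 hP⟩, rfl⟩
    · rintro ⟨cs, ⟨⟨hcs, hsemi⟩, hQ⟩, rfl⟩
      exact ⟨⟨cs, hcs, rfl⟩, by rwa [semi_ofHeights], (hPQ cs hcs).2 hQ⟩
  rw [← Set.ncard_image_of_injective _ ofHeights_zero_injective, ← hset]
  rfl

end Bargraph

/-- least column height and width of the leftmost horizontal segment are
equidistributed on bargraphs of semiperimeter `n`. -/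
theorem lch_lhs_equidistributed :
    ∀ n h : ℕ, 2 ≤ n →
      Nat.card {w : List Step // IsBargraph w ∧ semi w = n ∧
          (h : ℤ) ∈ colHeights 0 w ∧ ∀ c ∈ colHeights 0 w, (h : ℤ) ≤ c}
        = Nat.card {w : List Step // IsBargraph w ∧ semi w = n ∧ lhsW w = h} := by
  intro n h _
  rw [Bargraph.card_bargraph_eq_ncard (Q := fun cs => h ∈ cs ∧ ∀ c ∈ cs, h ≤ c) fun cs _ => by
      rw [← Nat.cast_zero, Bargraph.colHeights_ofHeights]; simp,
    Bargraph.card_bargraph_eq_ncard (Q := fun cs => Bargraph.headRun cs = h) fun cs hcs => by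
      rw [Bargraph.lhsW_ofHeights hcs]]
  exact Bargraph.ncard_min_eq_ncard_headRun h n
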